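/- arXiv:2602.13524 — 3 statements merged into one kernel-verified Lean document; each statement's English description precedes it below -/
import Mathlib

section
/- Let X ∈ ℝ^{D×N} and Y ∈ ℝ^{D×N} with Σ_X = X Xᵀ and Σ_Y = Y Yᵀ invertible, let x_1 and y_1 denote the first columns of X and Y, let α ∈ ℝ, and let Ω ∈ ℝ^{D×D}. If Xᵀ Ω Y = α e_1 e_1ᵀ (where e_1 ∈ ℝ^N is the first standard basis vector), then Ω = α (Σ_X^{-1} x_1)(Σ_Y^{-1} y_1)ᵀ. -/
open Matrix

/-! Multiplying `Xᵀ Ω Y` by `X` on the left and `Yᵀ` on the right gives `Σ_X Ω Σ_Y`, so `Ω` is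
recovered as `Σ_X⁻¹ X (Xᵀ Ω Y) Yᵀ Σ_Y⁻¹`. For `Xᵀ Ω Y = α e₁ e₁ᵀ` the middle factor is the rank-one
matrix `α x₁ y₁ᵀ`, and since `Σ_Y⁻¹` is symmetric, `y₁ᵀ Σ_Y⁻¹ = (Σ_Y⁻¹ y₁)ᵀ`. -/

namespace Matrix

variable {l m n : Type*} {R : Type*}

theorem eq_of_transpose_mul_mul_eq [Fintype l] [Fintype m] [Fintype n] [DecidableEq l]
    [DecidableEq m] [CommRing R]
    {X : Matrix l n R} {Y : Matrix m n R} (hX : IsUnit (X * Xᵀ).det) (hY : IsUnit (Y * Yᵀ).det)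
    {Ω : Matrix l m R} {M : Matrix n n R} (h : Xᵀ * Ω * Y = M) :
    Ω = (X * Xᵀ)⁻¹ * (X * M * Yᵀ) * (Y * Yᵀ)⁻¹ := by
  have hgram : X * M * Yᵀ = (X * Xᵀ) * Ω * (Y * Yᵀ) := by
    simp only [← h, Matrix.mul_assoc]
  rw [hgram, Matrix.mul_assoc, Matrix.mul_assoc, mul_nonsing_inv _ hY, Matrix.mul_one,
    ← Matrix.mul_assoc, nonsing_inv_mul _ hX, Matrix.one_mul]

theorem mul_single_mul_transpose [Fintype n] [DecidableEq n] [CommSemiring R]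
    (X : Matrix l n R) (Y : Matrix m n R) (i j : n) (a : R) :
    X * single i j a * Yᵀ = a • vecMulVec (X.col i) (Y.col j) := by
  have hsingle : single i j a = a • single i j 1 := by rw [smul_single, smul_eq_mul, mul_one]
  rw [hsingle, single_eq_single_vecMulVec_single, Matrix.mul_smul, Matrix.smul_mul,
    mul_vecMulVec, vecMulVec_mul, mulVec_single_one, single_one_vecMul, row_transpose]

theorem mul_vecMulVec_mul [Fintype m] [Fintype n] [CommSemiring R]
    (A : Matrix l m R) (u : m → R) (v : n → R) (B : Matrix n l R) :
    A * vecMulVec u v * B = vecMulVec (A *ᵥ u) (Bᵀ *ᵥ v) := by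
  rw [mul_vecMulVec, vecMulVec_mul, mulVec_transpose]

end Matrix

/-- **The teacher constraint determines a rank-one head.**
If `Σ_X = X Xᵀ` and `Σ_Y = Y Yᵀ` are invertible and `Xᵀ Ω Y = α e₁ e₁ᵀ` (the head attends
exactly to the feature pair `(x₁, y₁)`), then `Ω = α (Σ_X⁻¹ x₁)(Σ_Y⁻¹ y₁)ᵀ`. -/
theorem omega_eq_of_attends_first_pair {D N : ℕ} (hN : 1 ≤ N)
    (X Y : Matrix (Fin D) (Fin N) ℝ)
    (hX : IsUnit (X * Xᵀ).det) (hY : IsUnit (Y * Yᵀ).det)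
    (x1 : Fin D → ℝ) (hx1 : x1 = fun k => X k ⟨0, by omega⟩)
    (y1 : Fin D → ℝ) (hy1 : y1 = fun k => Y k ⟨0, by omega⟩)
    (α : ℝ) (Om : Matrix (Fin D) (Fin D) ℝ)
    (h : Xᵀ * Om * Y = Matrix.single (⟨0, by omega⟩ : Fin N) (⟨0, by omega⟩ : Fin N) α) :
    Om = α • Matrix.vecMulVec ((X * Xᵀ)⁻¹ *ᵥ x1) ((Y * Yᵀ)⁻¹ *ᵥ y1) := by
  subst hx1 hy1
  rw [eq_of_transpose_mul_mul_eq hX hY h, mul_single_mul_transpose, Matrix.mul_smul,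
    Matrix.smul_mul, mul_vecMulVec_mul, transpose_nonsing_inv, transpose_mul,
    transpose_transpose]
  rfl
end

section
/- Assume p ∈ (0,1), m ≥ 2, and X, Y ∈ ℝ^{D×N} with Σ_X = X Xᵀ and Σ_Y = Y Yᵀ invertible. Fix α > 0 and define the teacher matrix Ω_T = α (Σ_X^{-1} x_1)(Σ_Y^{-1} y_1)ᵀ, where x_1, y_1 are the first columns of X, Y. Generate the random query token r = Σ_i a_i x_i with a_i i.i.d. Bernoulli(p) and random key tokens s_j = Σ_i b_{j,i} y_i for j = 1,…,m with b_{j,i} i.i.d. Bernoulli(p), all coefficients mutually independent. For any Ω ∈ ℝ^{D×D} define student logits ℓ_j^{(Ω)} = rᵀ Ω s_j and attention p_Ω(· | r, s_{1:m}) = softmax(ℓ_1^{(Ω)},…,ℓ_m^{(Ω)}), and teacher attention p_T = softmax(rᵀΩ_T s_1,…,rᵀΩ_T s_m). Define the population objective L(Ω) = E[ −Σ_{j=1}^m p_T(j | r,s_{1:m}) log p_Ω(j | r,s_{1:m}) ]. Then L(Ω) ≥ L(Ω_T) for every Ω ∈ ℝ^{D×D}, with equality if and only if Ω = Ω_T;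 i.e., Ω_T is the unique global minimizer of L. In particular the minimizer has rank 1, with left singular direction parallel to Σ_X^{-1} x_1 and right singular direction parallel to Σ_Y^{-1} y_1. -/
/-!
Every `0/1` pattern of the independent `Bernoulli(p)` coefficients has positive probability, so
`L(Ω)` is a positive combination of the cross-entropies at the finitely many patterns. By Gibbs'
inequality each of these is minimized by the teacher, and `L(Ω) = L(Ω_T)` forces the student and
teacher attention distributions to agree at every pattern. The pattern with query `xᵢ` and keys
`yₖ, 0, …, 0` reads off the logit gap `xᵢᵀ Ω yₖ`, hence `Xᵀ Ω Y = Xᵀ Ω_T Y`, and the invertible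
Gram matrices give `Ω = Ω_T`.
-/

open MeasureTheory ProbabilityTheory Matrix Finset

noncomputable def softmax {m : ℕ} (a : Fin m → ℝ) : Fin m → ℝ :=
  fun i => Real.exp (a i) / ∑ k, Real.exp (a k)

open Real InformationTheory

section Softmax

variable {m : ℕ}

lemma sum_exp_pos (a : Fin m → ℝ) (i : Fin m) : 0 < ∑ k, exp (a k) :=
  Finset.sum_pos (fun _ _ => exp_pos _) ⟨i, Finset.mem_univ i⟩

lemma softmax_pos (a : Fin m → ℝ) (i : Fin m) : 0 < softmax a i :=
  div_pos (exp_pos _) (sum_exp_pos a i)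

lemma sum_softmax [NeZero m] (a : Fin m → ℝ) : ∑ i, softmax a i = 1 := by
  simp only [softmax]
  rw [← Finset.sum_div, div_self (sum_exp_pos a 0).ne']

lemma log_softmax (a : Fin m → ℝ) (i : Fin m) :
    log (softmax a i) = a i - log (∑ k, exp (a k)) := by
  rw [softmax, log_div (exp_pos _).ne' (sum_exp_pos a i).ne', log_exp]

lemma sub_eq_sub_of_softmax_eq {u v : Fin m → ℝ} (h : softmax u = softmax v) (j j' : Fin m) :
    u j - u j' = v j - v j' := by
  have hj := congrArg log (congrFun h j)
  have hj' := congrArg log (congrFun h j')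
  rw [log_softmax, log_softmax] at hj hj'
  linarith

end Softmax

section Gibbs

variable {ι : Type*} [Fintype ι] {P Q : ι → ℝ}

lemma sum_mul_log_sub_sum_mul_log_eq_sum_mul_klFun (hP : ∀ i, 0 < P i) (hQ : ∀ i, 0 < Q i)
    (hPQ : ∑ i, P i = ∑ i, Q i) :
    ∑ i, P i * log (P i) - ∑ i, P i * log (Q i) = ∑ i, Q i * klFun (P i / Q i) := by
  have hterm : ∀ i, Q i * klFun (P i / Q i) =
      P i * log (P i) - P i * log (Q i) + (Q i - P i) := by
    intro i
    rw [klFun, log_div (hP i).ne' (hQ i).ne', mul_sub, mul_add, ← mul_assoc,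
      mul_div_cancel₀ _ (hQ i).ne']
    ring
  simp only [hterm, Finset.sum_add_distrib, Finset.sum_sub_distrib, hPQ, sub_self, add_zero]

theorem sum_mul_log_le_sum_mul_log (hP : ∀ i, 0 < P i) (hQ : ∀ i, 0 < Q i)
    (hPQ : ∑ i, P i = ∑ i, Q i) : ∑ i, P i * log (Q i) ≤ ∑ i, P i * log (P i) := by
  have hkl : 0 ≤ ∑ i, Q i * klFun (P i / Q i) :=
    Finset.sum_nonneg fun i _ => mul_nonneg (hQ i).le (klFun_nonneg (div_pos (hP i) (hQ i)).le)
  linarith [sum_mul_log_sub_sum_mul_log_eq_sum_mul_klFun hP hQ hPQ]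

theorem sum_mul_log_eq_sum_mul_log_iff (hP : ∀ i, 0 < P i) (hQ : ∀ i, 0 < Q i)
    (hPQ : ∑ i, P i = ∑ i, Q i) : ∑ i, P i * log (Q i) = ∑ i, P i * log (P i) ↔ Q = P := by
  have hkl : ∀ i, 0 ≤ Q i * klFun (P i / Q i) := fun i =>
    mul_nonneg (hQ i).le (klFun_nonneg (div_pos (hP i) (hQ i)).le)
  rw [eq_comm, ← sub_eq_zero, sum_mul_log_sub_sum_mul_log_eq_sum_mul_klFun hP hQ hPQ,
    Finset.sum_eq_zero_iff_of_nonneg fun i _ => hkl i, funext_iff]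
  refine forall_congr' fun i => ?_
  rw [mul_eq_zero, or_iff_right (hQ i).ne', klFun_eq_zero_iff (div_pos (hP i) (hQ i)).le,
    div_eq_one_iff_eq (hQ i).ne', eq_comm]
  simp

end Gibbs

section CrossEntropy

variable {m : ℕ}

noncomputable def softmaxCrossEntropy (u v : Fin m → ℝ) : ℝ :=
  -∑ j, softmax u j * log (softmax v j)

variable [NeZero m]

theorem softmaxCrossEntropy_self_le (u v : Fin m → ℝ) :
    softmaxCrossEntropy u u ≤ softmaxCrossEntropy u v :=
  neg_le_neg (sum_mul_log_le_sum_mul_log (softmax_pos u) (softmax_pos v)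
    (by rw [sum_softmax, sum_softmax]))

theorem softmaxCrossEntropy_eq_self_iff (u v : Fin m → ℝ) :
    softmaxCrossEntropy u v = softmaxCrossEntropy u u ↔ softmax v = softmax u := by
  rw [softmaxCrossEntropy, softmaxCrossEntropy, neg_inj]
  exact sum_mul_log_eq_sum_mul_log_iff (softmax_pos u) (softmax_pos v)
    (by rw [sum_softmax, sum_softmax])

end CrossEntropy

section Atoms

variable {Ω : Type*} [MeasurableSpace Ω] {μ : Measure Ω}

lemma measure_preimage_pos_of_bernoulli [IsProbabilityMeasure μ] {f : Ω → ℝ} (hf : Measurable f)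
    (h01 : ∀ ω, f ω = 0 ∨ f ω = 1) {p : ℝ} (hp : p ∈ Set.Ioo (0 : ℝ) 1)
    (hber : μ {ω | f ω = 1} = ENNReal.ofReal p) {t : ℝ} (ht : t = 0 ∨ t = 1) :
    0 < μ (f ⁻¹' {t}) := by
  rcases ht with rfl | rfl
  · have hcompl : f ⁻¹' {0} = {ω | f ω = 1}ᶜ := by
      ext ω
      rcases h01 ω with h | h <;> simp [h]
    have hmeas : MeasurableSet {ω | f ω = 1} := hf (measurableSet_singleton 1)
    rw [hcompl, prob_compl_eq_one_sub hmeas, hber]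
    exact tsub_pos_of_lt (ENNReal.ofReal_lt_one.2 hp.2)
  · exact hber ▸ ENNReal.ofReal_pos.2 hp.1

lemma ProbabilityTheory.iIndepFun.measure_preimage_singleton_pos {ι β : Type*} [Fintype ι]
    [MeasurableSpace β] [MeasurableSingletonClass β] {c : ι → Ω → β} (hindep : iIndepFun c μ)
    {v : ι → β} (hpos : ∀ k, 0 < μ (c k ⁻¹' {v k})) : 0 < μ ((fun ω k => c k ω) ⁻¹' {v}) := by
  have hatom : (fun ω k => c k ω) ⁻¹' {v} = ⋂ k ∈ (Finset.univ : Finset ι), c k ⁻¹' {v k} := by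
    ext ω
    simp [funext_iff]
  rw [hatom, hindep.measure_inter_preimage_eq_mul _ fun k _ => measurableSet_singleton (v k),
    pos_iff_ne_zero, Finset.prod_ne_zero_iff]
  exact fun k _ => (hpos k).ne'

lemma ProbabilityTheory.iIndepFun.measure_preimage_singleton_pos_of_bernoulli
    [IsProbabilityMeasure μ] {ι : Type*} [Fintype ι] [DecidableEq ι] {c : ι → Ω → ℝ}
    (hindep : iIndepFun c μ) (hmeas : ∀ k, Measurable (c k))
    (h01 : ∀ k ω, c k ω = 0 ∨ c k ω = 1) {p : ℝ} (hp : p ∈ Set.Ioo (0 : ℝ) 1)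
    (hber : ∀ k, μ {ω | c k ω = 1} = ENNReal.ofReal p) :
    ∀ v ∈ Fintype.piFinset fun _ => ({0, 1} : Finset ℝ), 0 < μ ((fun ω k => c k ω) ⁻¹' {v}) :=
  fun v hv => hindep.measure_preimage_singleton_pos fun k =>
    measure_preimage_pos_of_bernoulli (hmeas k) (h01 k) hp (hber k)
      (by simpa using Fintype.mem_piFinset.1 hv k)

variable {E : Type*} [MeasurableSpace E] [MeasurableSingletonClass E] {C : Ω → E}

lemma integral_comp_eq_sum_of_forall_mem [IsFiniteMeasure μ] (hC : Measurable C) {S : Finset E}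
    (hS : ∀ ω, C ω ∈ S) (f : E → ℝ) :
    ∫ ω, f (C ω) ∂μ = ∑ v ∈ S, μ.real (C ⁻¹' {v}) * f v := by
  have hsplit : (fun ω => f (C ω)) =
      fun ω => ∑ v ∈ S, (C ⁻¹' {v}).indicator (fun _ => f v) ω := by
    funext ω
    rw [Finset.sum_eq_single_of_mem (C ω) (hS ω)]
    · simp
    · intro v _ hv
      exact Set.indicator_of_notMem (Ne.symm hv) _
  have hatom : ∀ v, MeasurableSet (C ⁻¹' {v}) := fun v => hC (measurableSet_singleton v)
  rw [hsplit, integral_finsetSum _ fun v _ => (integrable_const (f v)).indicator (hatom v)]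
  exact Finset.sum_congr rfl fun v _ => by rw [integral_indicator_const _ (hatom v), smul_eq_mul]

variable [IsFiniteMeasure μ] (hC : Measurable C) {S : Finset E} (hS : ∀ ω, C ω ∈ S) {f g : E → ℝ}
include hC hS

lemma integral_comp_le_integral_comp (hfg : ∀ v ∈ S, f v ≤ g v) :
    ∫ ω, f (C ω) ∂μ ≤ ∫ ω, g (C ω) ∂μ := by
  rw [integral_comp_eq_sum_of_forall_mem hC hS, integral_comp_eq_sum_of_forall_mem hC hS]
  exact Finset.sum_le_sum fun v hv => mul_le_mul_of_nonneg_left (hfg v hv) measureReal_nonneg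

lemma eqOn_of_integral_comp_eq (hpos : ∀ v ∈ S, 0 < μ (C ⁻¹' {v})) (hfg : ∀ v ∈ S, f v ≤ g v)
    (heq : ∫ ω, g (C ω) ∂μ = ∫ ω, f (C ω) ∂μ) : ∀ v ∈ S, g v = f v := by
  rw [integral_comp_eq_sum_of_forall_mem hC hS, integral_comp_eq_sum_of_forall_mem hC hS,
    eq_comm, Finset.sum_eq_sum_iff_of_le fun v hv =>
      mul_le_mul_of_nonneg_left (hfg v hv) measureReal_nonneg] at heq
  intro v hv
  have hreal : 0 < μ.real (C ⁻¹' {v}) := ENNReal.toReal_pos (hpos v hv).ne' (measure_ne_top μ _)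
  exact (mul_left_cancel₀ hreal.ne' (heq v hv)).symm

end Atoms

lemma Matrix.of_mulVec_eq_sum_mul {k n : Type*} [Fintype k] (x : k → n → ℝ) (u : k → ℝ) :
    (of fun d i => x i d) *ᵥ u = fun d => ∑ i, u i * x i d := by
  funext d
  simp [mulVec, dotProduct, mul_comm]

theorem Matrix.eq_of_transpose_mul_mul_eq_s8 {R n n' k k' : Type*} [CommRing R] [Fintype n]
    [Fintype n'] [Fintype k] [Fintype k'] [DecidableEq n] [DecidableEq n'] {X : Matrix n k R}
    {Y : Matrix n' k' R} (hX : IsUnit (X * Xᵀ).det) (hY : IsUnit (Y * Yᵀ).det)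
    {A B : Matrix n n' R} (h : Xᵀ * A * Y = Xᵀ * B * Y) : A = B := by
  have hcancel : ∀ M : Matrix n n' R, (X * Xᵀ)⁻¹ * X * (Xᵀ * M * Y) * Yᵀ * (Y * Yᵀ)⁻¹ = M := by
    intro M
    calc (X * Xᵀ)⁻¹ * X * (Xᵀ * M * Y) * Yᵀ * (Y * Yᵀ)⁻¹
        = ((X * Xᵀ)⁻¹ * (X * Xᵀ)) * M * ((Y * Yᵀ) * (Y * Yᵀ)⁻¹) := by
          simp only [Matrix.mul_assoc]
      _ = M := by rw [nonsing_inv_mul _ hX, mul_nonsing_inv _ hY, Matrix.one_mul, Matrix.mul_one]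
  rw [← hcancel A, h, hcancel]

section Logits

variable {n n' : Type*} [Fintype n] [Fintype n'] {m : ℕ}

def attnLogits (M : Matrix n n' ℝ) (r : n → ℝ) (s : Fin m → n' → ℝ) : Fin m → ℝ :=
  fun j => r ⬝ᵥ (M *ᵥ s j)

noncomputable def attnCrossEntropy (T Q : Matrix n n' ℝ) (r : n → ℝ) (s : Fin m → n' → ℝ) : ℝ :=
  softmaxCrossEntropy (attnLogits T r s) (attnLogits Q r s)

/-- The loss as a function of the feature coefficients of the query and of the `m` keys. -/
noncomputable def coeffCrossEntropy (T Q : Matrix n n' ℝ) (v : n ⊕ Fin m × n' → ℝ) : ℝ :=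
  attnCrossEntropy T Q (v ∘ Sum.inl) fun j i => v (Sum.inr (j, i))

lemma coeffCrossEntropy_sumElim (T Q : Matrix n n' ℝ) (u : n → ℝ) (w : Fin m → n' → ℝ) :
    coeffCrossEntropy T Q (Sum.elim u fun ji => w ji.1 ji.2) = attnCrossEntropy T Q u w :=
  rfl

lemma coeffCrossEntropy_self_le [NeZero m] (T Q : Matrix n n' ℝ) (v : n ⊕ Fin m × n' → ℝ) :
    coeffCrossEntropy T T v ≤ coeffCrossEntropy T Q v :=
  softmaxCrossEntropy_self_le _ _

lemma attnLogits_mulVec {k k' : Type*} [Fintype k] [Fintype k'] (Q : Matrix n n' ℝ)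
    (X : Matrix n k ℝ) (Y : Matrix n' k' ℝ) (u : k → ℝ) (w : Fin m → k' → ℝ) :
    attnLogits Q (X *ᵥ u) (fun j => Y *ᵥ w j) = attnLogits (Xᵀ * Q * Y) u w := by
  funext j
  simp only [attnLogits, mulVec_mulVec, dotProduct_mulVec, Matrix.mul_assoc, ← vecMul_vecMul,
    vecMul_transpose]

lemma attnCrossEntropy_sum_mul_eq_coeffCrossEntropy {k k' : Type*} [Fintype k] [Fintype k']
    (T Q : Matrix n n' ℝ) (x : k → n → ℝ) (y : k' → n' → ℝ) (u : k → ℝ) (w : Fin m → k' → ℝ) :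
    attnCrossEntropy T Q (fun d => ∑ i, u i * x i d) (fun j d => ∑ i, w j i * y i d) =
      coeffCrossEntropy ((of fun d i => x i d)ᵀ * T * of fun d i => y i d)
        ((of fun d i => x i d)ᵀ * Q * of fun d i => y i d) (Sum.elim u fun ji => w ji.1 ji.2) := by
  have hr : (fun d => ∑ i, u i * x i d) = (of fun d i => x i d) *ᵥ u :=
    (of_mulVec_eq_sum_mul x u).symm
  have hs : (fun j d => ∑ i, w j i * y i d) = fun j => (of fun d i => y i d) *ᵥ w j :=
    funext fun j => (of_mulVec_eq_sum_mul y (w j)).symm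
  rw [hr, hs, attnCrossEntropy, attnLogits_mulVec, attnLogits_mulVec]
  rfl

theorem eq_of_forall_softmax_attnLogits_eq (hm : 2 ≤ m) {M M' : Matrix n n' ℝ}
    (h : ∀ (u : n → ℝ) (w : Fin m → n' → ℝ), (∀ i, u i = 0 ∨ u i = 1) →
      (∀ j k, w j k = 0 ∨ w j k = 1) → softmax (attnLogits M u w) = softmax (attnLogits M' u w)) :
    M = M' := by
  classical
  ext i k
  let j₀ : Fin m := ⟨0, by omega⟩
  let j₁ : Fin m := ⟨1, by omega⟩
  have hj : j₁ ≠ j₀ := by simp [j₀, j₁, Fin.ext_iff]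
  have hu : ∀ i',
      Pi.single (M := fun _ => ℝ) i 1 i' = 0 ∨ Pi.single (M := fun _ => ℝ) i 1 i' = 1 :=
    fun i' => by by_cases hi : i' = i <;> simp [hi]
  have hw : ∀ j k', Pi.single (M := fun _ => n' → ℝ) j₀ (Pi.single k 1) j k' = 0 ∨
      Pi.single (M := fun _ => n' → ℝ) j₀ (Pi.single k 1) j k' = 1 := by
    intro j k'
    by_cases hjj : j = j₀
    · by_cases hk : k' = k <;> simp [hjj, hk]
    · simp [hjj]
  -- the query `eᵢ` against the keys `eₖ, 0, …, 0` has logit gap `M i k`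
  have hgap := sub_eq_sub_of_softmax_eq (h _ _ hu hw) j₀ j₁
  simpa [attnLogits, Pi.single_eq_of_ne hj, mulVec_single_one, single_one_dotProduct] using hgap

theorem eq_of_forall_coeffCrossEntropy_eq [DecidableEq n] [DecidableEq n'] (hm : 2 ≤ m)
    {T Q : Matrix n n' ℝ}
    (h : ∀ v : n ⊕ Fin m × n' → ℝ, v ∈ Fintype.piFinset (fun _ => ({0, 1} : Finset ℝ)) →
      coeffCrossEntropy T Q v = coeffCrossEntropy T T v) : Q = T := by
  have : NeZero m := ⟨by omega⟩
  refine eq_of_forall_softmax_attnLogits_eq hm fun u w hu hw => ?_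
  have hv : Sum.elim u (fun ji : Fin m × n' => w ji.1 ji.2) ∈
      Fintype.piFinset fun _ => ({0, 1} : Finset ℝ) :=
    Fintype.mem_piFinset.2 <| Sum.forall.2
      ⟨fun i => by simpa using hu i, fun ji => by simpa using hw ji.1 ji.2⟩
  have hTQ := h _ hv
  rw [coeffCrossEntropy_sumElim, coeffCrossEntropy_sumElim] at hTQ
  exact (softmaxCrossEntropy_eq_self_iff _ _).1 hTQ

end Logits

theorem teacher_is_unique_population_minimizer
    {Ω : Type*} [MeasurableSpace Ω] (μ : Measure Ω) [IsProbabilityMeasure μ]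
    {N D m : ℕ} (hm : 2 ≤ m) (p : ℝ) (hp : p ∈ Set.Ioo (0 : ℝ) 1)
    (x y : Fin N → Fin D → ℝ)
    (X : Matrix (Fin D) (Fin N) ℝ) (hX : X = Matrix.of fun k i => x i k)
    (Y : Matrix (Fin D) (Fin N) ℝ) (hY : Y = Matrix.of fun k i => y i k)
    (hXinv : IsUnit (X * Xᵀ).det) (hYinv : IsUnit (Y * Yᵀ).det)
    (OmT : Matrix (Fin D) (Fin D) ℝ)
    -- Bernoulli(p) coefficients, all mutually independent
    (a : Fin N → Ω → ℝ) (b : Fin m → Fin N → Ω → ℝ)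
    (hameas : ∀ i, Measurable (a i)) (hbmeas : ∀ j i, Measurable (b j i))
    (ha01 : ∀ i ω, a i ω = 0 ∨ a i ω = 1) (hb01 : ∀ j i ω, b j i ω = 0 ∨ b j i ω = 1)
    (haBer : ∀ i, μ {ω | a i ω = 1} = ENNReal.ofReal p)
    (hbBer : ∀ j i, μ {ω | b j i ω = 1} = ENNReal.ofReal p)
    (hindep : iIndepFun
      (Sum.elim (fun i => a i) (fun ji : Fin m × Fin N => b ji.1 ji.2) :
        Fin N ⊕ Fin m × Fin N → Ω → ℝ) μ)
    -- tokens
    (r : Ω → Fin D → ℝ) (hr : r = fun ω k => ∑ i, a i ω * x i k)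
    (s : Fin m → Ω → Fin D → ℝ) (hs : s = fun j ω k => ∑ i, b j i ω * y i k)
    -- population objective
    (L : Matrix (Fin D) (Fin D) ℝ → ℝ)
    (hL : ∀ Om : Matrix (Fin D) (Fin D) ℝ, L Om =
      ∫ ω, -∑ j, softmax (fun j' => r ω ⬝ᵥ (OmT *ᵥ s j' ω)) j *
        Real.log (softmax (fun j' => r ω ⬝ᵥ (Om *ᵥ s j' ω)) j) ∂μ) :
    ∀ Om : Matrix (Fin D) (Fin D) ℝ, L OmT ≤ L Om ∧ (L Om = L OmT ↔ Om = OmT) := by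
  intro Om
  have : NeZero m := ⟨by omega⟩
  set c : Fin N ⊕ Fin m × Fin N → Ω → ℝ := Sum.elim (fun i => a i) fun ji => b ji.1 ji.2
  have hc01 : ∀ k ω, c k ω = 0 ∨ c k ω = 1 := Sum.forall.2 ⟨ha01, fun ji => hb01 ji.1 ji.2⟩
  have hcmeas : ∀ k, Measurable (c k) := Sum.forall.2 ⟨hameas, fun ji => hbmeas ji.1 ji.2⟩
  have hcber : ∀ k, μ {ω | c k ω = 1} = ENNReal.ofReal p :=
    Sum.forall.2 ⟨haBer, fun ji => hbBer ji.1 ji.2⟩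
  let C : Ω → Fin N ⊕ Fin m × Fin N → ℝ := fun ω k => c k ω
  let S : Finset (Fin N ⊕ Fin m × Fin N → ℝ) := Fintype.piFinset fun _ => {0, 1}
  have hCS : ∀ ω, C ω ∈ S := fun ω => Fintype.mem_piFinset.2 fun k => by simpa using hc01 k ω
  have hCmeas : Measurable C := measurable_pi_lambda _ hcmeas
  have hLC : ∀ Q, L Q = ∫ ω, coeffCrossEntropy (Xᵀ * OmT * Y) (Xᵀ * Q * Y) (C ω) ∂μ := by
    intro Q
    subst hX hY hr hs
    refine (hL Q).trans (integral_congr_ae (ae_of_all _ fun ω => ?_))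
    have hCω : C ω = Sum.elim (fun i => a i ω) fun ji => b ji.1 ji.2 ω := by
      funext k
      rcases k with i | ji <;> rfl
    beta_reduce
    rw [hCω]
    exact attnCrossEntropy_sum_mul_eq_coeffCrossEntropy OmT Q x y (fun i => a i ω)
      fun j i => b j i ω
  have hgibbs : ∀ v ∈ S, coeffCrossEntropy (Xᵀ * OmT * Y) (Xᵀ * OmT * Y) v ≤
      coeffCrossEntropy (Xᵀ * OmT * Y) (Xᵀ * Om * Y) v :=
    fun v _ => coeffCrossEntropy_self_le _ _ v
  refine ⟨?_, fun heq => ?_, fun h => by rw [h]⟩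
  · rw [hLC, hLC]
    exact integral_comp_le_integral_comp hCmeas hCS hgibbs
  rw [hLC, hLC] at heq
  exact eq_of_transpose_mul_mul_eq_s8 hXinv hYinv <| eq_of_forall_coeffCrossEntropy_eq hm <|
    eqOn_of_integral_comp_eq hCmeas hCS
      (hindep.measure_preimage_singleton_pos_of_bernoulli hcmeas hc01 hp hcber) hgibbs heq
end

section
/- In the setting of the orthogonalization theorem — Ω_T = σ_1 u_1 v_1ᵀ + σ_2 u_2 v_2ᵀ with {u_1,u_2} and {v_1,v_2} orthonormal and σ_1 > σ_2 > 0, y_1 = v_1, x_1 = u_1, gaps δ_A(x_2,y_2) = x_1ᵀΩ_T(y_1−y_2) and δ_B(x_2,y_2) = x_2ᵀΩ_T(y_1−y_2), CE(δ*,δ) = −σ(δ*)log σ(δ) − (1−σ(δ*))log(1−σ(δ)) with σ(t)=1/(1+e^{−t}), fixed δ*_A, δ*_B ∈ ℝ, λ > 0, and J_λ(x_2,y_2) = CE(δ*_A,δ_A) + CE(δ*_B,δ_B) + (λ/2)(y_2ᵀy_1)² — suppose there exists a pair of unit vectors (x'_2, y'_2) with y'_2ᵀ y_1 = 0 that attains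 the infimum over unit-vector pairs of CE(δ*_A, δ_A(x_2,y_2)) + CE(δ*_B, δ_B(x_2,y_2)). Then any global minimizer (x_2^λ, y_2^λ) of J_λ over unit-vector pairs satisfies y_2^{λ⊤} y_1 = 0, i.e., the learned feature y_2^λ is exactly orthogonal to y_1. -/
open Matrix

/-- The logistic sigmoid `σ(t) = 1/(1+e^{−t})`. -/
noncomputable def sigmoid (t : ℝ) : ℝ := 1 / (1 + Real.exp (-t))

/-- Two-key cross-entropy between teacher attention `σ(δ*)` and student attention `σ(δ)`. -/
noncomputable def twoKeyCE (δstar δ : ℝ) : ℝ :=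
  -sigmoid δstar * Real.log (sigmoid δ) - (1 - sigmoid δstar) * Real.log (1 - sigmoid δ)

/-- **Exact orthogonalization.**
In the setting of the orthogonalization theorem, if some pair of unit vectors
`(x'₂, y'₂)` with `y'₂ᵀ y₁ = 0` attains the infimum of the CE part over unit-vector
pairs, then every global minimizer `(x₂^λ, y₂^λ)` of `J_λ` over unit-vector pairs
satisfies `y₂^{λ⊤} y₁ = 0`: the learned feature is exactly orthogonal to `y₁`. -/
theorem orthogonalization_exact {D : ℕ}
    (u1 u2 v1 v2 : Fin D → ℝ)
    (hu11 : u1 ⬝ᵥ u1 = 1) (hu22 : u2 ⬝ᵥ u2 = 1) (hu12 : u1 ⬝ᵥ u2 = 0)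
    (hv11 : v1 ⬝ᵥ v1 = 1) (hv22 : v2 ⬝ᵥ v2 = 1) (hv12 : v1 ⬝ᵥ v2 = 0)
    (σ1 σ2 : ℝ) (hσ : σ1 > σ2) (hσ2 : σ2 > 0)
    (OmT : Matrix (Fin D) (Fin D) ℝ)
    (hOmT : OmT = σ1 • Matrix.vecMulVec u1 v1 + σ2 • Matrix.vecMulVec u2 v2)
    (δA δB : (Fin D → ℝ) → (Fin D → ℝ) → ℝ)
    (hδA : δA = fun _x2 y2 => u1 ⬝ᵥ (OmT *ᵥ (v1 - y2)))
    (hδB : δB = fun x2 y2 => x2 ⬝ᵥ (OmT *ᵥ (v1 - y2)))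
    (δAstar δBstar : ℝ) (lam : ℝ) (hlam : 0 < lam)
    (CEL : (Fin D → ℝ) → (Fin D → ℝ) → ℝ)
    (hCEL : CEL = fun x2 y2 => twoKeyCE δAstar (δA x2 y2) + twoKeyCE δBstar (δB x2 y2))
    (J : (Fin D → ℝ) → (Fin D → ℝ) → ℝ)
    (hJ : J = fun x2 y2 => CEL x2 y2 + lam / 2 * (y2 ⬝ᵥ v1) ^ 2)
    -- a CE-optimal comparison pair orthogonal to `y₁ = v₁`
    (x2' y2' : Fin D → ℝ) (hx2' : x2' ⬝ᵥ x2' = 1) (hy2' : y2' ⬝ᵥ y2' = 1)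
    (horth : y2' ⬝ᵥ v1 = 0)
    (hopt : ∀ x2 y2 : Fin D → ℝ, x2 ⬝ᵥ x2 = 1 → y2 ⬝ᵥ y2 = 1 → CEL x2' y2' ≤ CEL x2 y2)
    -- a global minimizer of `J_λ`
    (x2l y2l : Fin D → ℝ) (hx2l : x2l ⬝ᵥ x2l = 1) (hy2l : y2l ⬝ᵥ y2l = 1)
    (hmin : ∀ x2 y2 : Fin D → ℝ, x2 ⬝ᵥ x2 = 1 → y2 ⬝ᵥ y2 = 1 → J x2l y2l ≤ J x2 y2) :
    y2l ⬝ᵥ v1 = 0 := by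
  have h1 := hmin x2' y2' hx2' hy2'
  have h2 := hopt x2l y2l hx2l hy2l
  rw [hJ] at h1
  simp only [horth] at h1
  have hpen : lam / 2 * (y2l ⬝ᵥ v1) ^ 2 ≤ 0 := by nlinarith
  have : (y2l ⬝ᵥ v1) ^ 2 ≤ 0 := by nlinarith
  nlinarith [sq_nonneg (y2l ⬝ᵥ v1)]
end
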